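/- arXiv:1203.3368 — 3 statements merged into one kernel-verified Lean document; each statement's English description precedes it below -/
import Mathlib

section
/- With E as above (rows Cⱼ⊗Cⱼ for C with CCᵀ = I − J/m, CᵀC = I), the vector u₀ obtained by flattening the identity matrix I_{m−1} into a vector of length (m−1)² is an eigenvector of EᵀE with eigenvalue (m−1)/m. -/
open Matrix BigOperators

/-!
Let `E` have rows `Cⱼ ⊗ Cⱼ`. Then `E u₀` collects the diagonal of `C Cᵀ = I − J/m`, which is the
constant `1 − 1/m`, and `Eᵀ` sends a constant vector `c` to `c · vec (Cᵀ C) = c · u₀`.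
-/

namespace Matrix

variable {ι κ R : Type*} [CommSemiring R]

def rowKroneckerSquare (C : Matrix ι κ R) : Matrix ι (κ × κ) R :=
  of fun j p => C j p.1 * C j p.2

theorem rowKroneckerSquare_mulVec_vec [Fintype κ] (C : Matrix ι κ R) (A : Matrix κ κ R) :
    rowKroneckerSquare C *ᵥ vec A = diag (C * Aᵀ * Cᵀ) := by
  ext j
  simp only [rowKroneckerSquare, vec, mulVec, dotProduct, diag, mul_apply, transpose_apply,
    of_apply, Fintype.sum_prod_type, Finset.sum_mul]
  rw [Finset.sum_comm]
  refine Finset.sum_congr rfl fun t _ => Finset.sum_congr rfl fun s _ => ?_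
  ring

theorem rowKroneckerSquare_transpose_mulVec [Fintype ι] [DecidableEq ι]
    (C : Matrix ι κ R) (w : ι → R) :
    (rowKroneckerSquare C)ᵀ *ᵥ w = vec (Cᵀ * diagonal w * C) := by
  ext ⟨s, t⟩
  rw [vec, mul_apply]
  simp only [rowKroneckerSquare, mulVec, dotProduct, mul_diagonal, transpose_apply, of_apply]
  refine Finset.sum_congr rfl fun j _ => ?_
  ring

theorem rowKroneckerSquare_transpose_mulVec_const [Fintype ι] [DecidableEq ι]
    (C : Matrix ι κ R) (c : R) :
    (rowKroneckerSquare C)ᵀ *ᵥ (fun _ => c) = c • vec (Cᵀ * C) := by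
  rw [rowKroneckerSquare_transpose_mulVec, ← vec_smul, ← smul_one_eq_diagonal, Matrix.mul_smul,
    Matrix.mul_one, Matrix.smul_mul]

end Matrix

/-- With `E` the matrix whose rows are `Cⱼ ⊗ Cⱼ` (for `C` with `CCᵀ = I − J/m`, `CᵀC = I`),
the flattened identity matrix `u₀` is an eigenvector of `EᵀE` with eigenvalue `(m−1)/m`. -/
theorem stmt_7 (m : ℕ) (C : Matrix (Fin m) (Fin (m - 1)) ℝ)
    (hCCt : C * Cᵀ = 1 - (1 / (m : ℝ)) • (Matrix.of fun _ _ => (1 : ℝ)))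
    (hCtC : Cᵀ * C = 1)
    (E : Matrix (Fin m) (Fin (m - 1) × Fin (m - 1)) ℝ)
    (hE : ∀ j s t, E j (s, t) = C j s * C j t)
    (u₀ : Fin (m - 1) × Fin (m - 1) → ℝ)
    (hu₀ : ∀ s t, u₀ (s, t) = if s = t then 1 else 0) :
    (Eᵀ * E).mulVec u₀ = (((m : ℝ) - 1) / m) • u₀ := by
  rcases Nat.eq_zero_or_pos m with rfl | hm
  · ext ⟨s, _⟩
    exact s.elim0
  have hE_eq : E = rowKroneckerSquare C := by
    ext j ⟨s, t⟩
    exact hE j s t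
  have hu₀_eq : u₀ = vec 1 := by
    ext ⟨s, t⟩
    simp only [hu₀, vec, one_apply, eq_comm]
  have hdiag : diag (C * Cᵀ) = fun _ => ((m : ℝ) - 1) / m := by
    have hm : (m : ℝ) ≠ 0 := by positivity
    ext j
    simp [hCCt, sub_div, div_self hm]
  rw [hE_eq, hu₀_eq, ← mulVec_mulVec, rowKroneckerSquare_mulVec_vec, transpose_one, Matrix.mul_one,
    hdiag, rowKroneckerSquare_transpose_mulVec_const, hCtC]
end

section
/- Let g : S_m^n → ℝ^{(m−1)×(m−1)} have the form g(x) = B + Σᵢ Aⁱ·ρ¹(xᵢ) with E g = 0 (so B = 0), and suppose g(x)g(x)ᵀ = M for all x, where M ≠ 0 is a fixed matrix. Then at most one of the matrices A¹,…,Aⁿ is nonzero. (Because for i ≠ j, the degree-2 Fourier coefficient of g·gᵀ at the representation which is ρ¹ in coordinates i,j and trivial elsewhere must vanish, forcing AⁱₜₚAʲ_{wu} + AʲₜₚAⁱ_{wu} = 0 for all indices, which implies one of Aⁱ, Aʲ = 0.) -/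
/-!
Fix `i ≠ j` and freeze every other coordinate at `1`, so that `g = C + Aⁱ ρ(σ) + Aʲ ρ(τ)` with
`σ = xᵢ` and `τ = xⱼ`. Since `g gᵀ` is constant, its mixed second difference in `(σ, τ)` vanishes:
`Aⁱ (ρ(σ) - 1) (ρ(τ) - 1)ᵀ Aʲᵀ + Aʲ (ρ(τ) - 1) (ρ(σ) - 1)ᵀ Aⁱᵀ = 0`.

The character `χ(σ) = #fix(σ) - 1` satisfies `∑ χ = 0` and `∑ χ² = m!`. The second identity makes
the commutant of `ρ` one-dimensional, which yields Schur orthogonality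
`∑_σ ρ(σ)_{pq} ρ(σ) = (m! / (m - 1)) E_{pq}`; the first one gives `∑_σ ρ(σ) = 0`. Weighting the
mixed difference by `ρ(σ)_{pp} ρ(τ)_{up}` and summing over `σ, τ` therefore leaves
`Aⁱ E_{pu} Aʲᵀ + Aʲ E_{up} Aⁱᵀ = 0`, i.e. `Aⁱ_{tp} Aʲ_{wu} + Aʲ_{tu} Aⁱ_{wp} = 0` for all indices.
Taking `w = t` kills the row `t` of `Aʲ` whenever `Aⁱ_{tp} ≠ 0`, and then all of `Aʲ`.
-/

open Matrix Finset

namespace Equiv.Perm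

variable {α : Type*} [Fintype α] [DecidableEq α]

theorem card_filter_forall_mem_apply_eq_self (s : Finset α) :
    #{σ : Perm α | ∀ a ∈ s, σ a = a} = (Fintype.card α - #s).factorial := by
  calc #{σ : Perm α | ∀ a ∈ s, σ a = a}
      = Fintype.card {σ : Perm α // ∀ a, ¬a ∉ s → σ a = a} := by
        rw [Fintype.card_subtype]; simp
    _ = Fintype.card (Perm {a // a ∉ s}) :=
        (Fintype.card_congr (Perm.subtypeEquivSubtypePerm _)).symm
    _ = (Fintype.card α - #s).factorial := by
        rw [Fintype.card_perm, Fintype.card_subtype_compl, Fintype.card_coe]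

theorem sum_card_fixedPoints :
    ∑ σ : Perm α, #{a | σ a = a} = Fintype.card α * (Fintype.card α - 1).factorial := by
  have hfix : ∀ a : α, #{σ : Perm α | σ a = a} = (Fintype.card α - 1).factorial := fun a => by
    simpa using card_filter_forall_mem_apply_eq_self {a}
  calc ∑ σ : Perm α, #{a | σ a = a} = ∑ a : α, #{σ : Perm α | σ a = a} := by
        simp only [card_filter]
        exact sum_comm
    _ = Fintype.card α * (Fintype.card α - 1).factorial := by simp [hfix]

theorem sum_card_fixedPoints_sq :
    ∑ σ : Perm α, #{a | σ a = a} ^ 2 = Fintype.card α * (Fintype.card α - 1).factorial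
      + Fintype.card α * (Fintype.card α - 1) * (Fintype.card α - 2).factorial := by
  calc ∑ σ : Perm α, #{a | σ a = a} ^ 2
      = ∑ a : α, ∑ b : α, #{σ : Perm α | ∀ c ∈ ({a, b} : Finset α), σ c = c} := by
        simp only [card_filter, sq, sum_mul_sum, mem_insert, mem_singleton, forall_eq_or_imp,
          forall_eq, ite_zero_mul_ite_zero, mul_one]
        rw [sum_comm]
        exact sum_congr rfl fun a _ => sum_comm
    _ = ∑ a : α, ((Fintype.card α - 1).factorial
          + (Fintype.card α - 1) * (Fintype.card α - 2).factorial) := by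
        refine sum_congr rfl fun a _ => ?_
        have hoff : ∀ b ∈ ({a}ᶜ : Finset α),
            #{σ : Perm α | ∀ c ∈ ({a, b} : Finset α), σ c = c} = (Fintype.card α - 2).factorial :=
          fun b hb => by
            rw [card_filter_forall_mem_apply_eq_self, card_pair (by simpa [eq_comm] using hb)]
        rw [Fintype.sum_eq_add_sum_compl a, sum_congr rfl hoff, pair_eq_singleton,
          card_filter_forall_mem_apply_eq_self, card_singleton, sum_const, card_compl,
          card_singleton, smul_eq_mul]
    _ = _ := by simp [mul_add, mul_assoc]

theorem sum_card_fixedPoints_sub_one {K : Type*} [CommRing K] [Nonempty α] :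
    ∑ σ : Perm α, ((#{a | σ a = a} : K) - 1) = 0 := by
  rw [sum_sub_distrib, ← Nat.cast_sum, sum_card_fixedPoints,
    Nat.mul_factorial_pred Fintype.card_ne_zero]
  simp [Fintype.card_perm]

theorem sum_card_fixedPoints_sub_one_sq {K : Type*} [CommRing K] (h : 2 ≤ Fintype.card α) :
    ∑ σ : Perm α, ((#{a | σ a = a} : K) - 1) ^ 2 = (Fintype.card (Perm α) : K) := by
  obtain ⟨k, hk⟩ : ∃ k, Fintype.card α = k + 2 := ⟨_, (Nat.sub_add_cancel h).symm⟩
  have hsum := congrArg (Nat.cast (R := K)) (sum_card_fixedPoints (α := α))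
  have hsq := congrArg (Nat.cast (R := K)) (sum_card_fixedPoints_sq (α := α))
  simp only [sub_sq, one_pow, mul_one, sum_add_distrib, sum_sub_distrib, ← mul_sum, sum_const,
    card_univ, nsmul_one]
  push_cast at hsum hsq
  rw [hsum, hsq, Fintype.card_perm, hk]
  simp [Nat.factorial_succ]
  ring

end Equiv.Perm

namespace Matrix

open Representation

theorem mul_single_one_mul_apply {R l m n o : Type*} [Semiring R] [Fintype m] [Fintype n]
    [DecidableEq m] [DecidableEq n] (A : Matrix l m R) (B : Matrix n o R) (j : m) (k : n)
    (a : l) (b : o) : (A * single j k (1 : R) * B) a b = A a j * B k b := by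
  simp [mul_apply, single_apply, ite_and]

theorem mul_single_mul_transpose {R n : Type*} [CommSemiring R] [Fintype n] [DecidableEq n]
    (A B : Matrix n n R) (p q u : n) :
    A * single p q (1 : R) * (B * single u q 1)ᵀ = A * single p u 1 * Bᵀ := by
  rw [transpose_mul, transpose_single, ← mul_assoc, mul_assoc A, single_mul_single_same, mul_one]

theorem mul_transpose_mixed_difference {R n : Type*} [CommRing R] [Fintype n] [DecidableEq n]
    (C X X₀ Y Y₀ : Matrix n n R) :
    (X - X₀) * (Y - Y₀)ᵀ + (Y - Y₀) * (X - X₀)ᵀ =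
      (C + X + Y) * (C + X + Y)ᵀ - (C + X + Y₀) * (C + X + Y₀)ᵀ
        - (C + X₀ + Y) * (C + X₀ + Y)ᵀ + (C + X₀ + Y₀) * (C + X₀ + Y₀)ᵀ := by
  simp only [transpose_add, transpose_sub]
  noncomm_ring

theorem sum_smul_mul_transpose_add_eq_zero {R n β γ : Type*} [CommSemiring R] [Fintype n]
    [Fintype β] [Fintype γ] (w : β → R) (w' : γ → R) (U : β → Matrix n n R)
    (V : γ → Matrix n n R) (h : ∀ b c, U b * (V c)ᵀ + V c * (U b)ᵀ = 0) :
    (∑ b, w b • U b) * (∑ c, w' c • V c)ᵀ + (∑ c, w' c • V c) * (∑ b, w b • U b)ᵀ = 0 := by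
  have expand : (∑ b, w b • U b) * (∑ c, w' c • V c)ᵀ + (∑ c, w' c • V c) * (∑ b, w b • U b)ᵀ
      = ∑ b, ∑ c, (w b * w' c) • (U b * (V c)ᵀ + V c * (U b)ᵀ) := by
    simp only [transpose_sum, transpose_smul, Finset.sum_mul_sum, smul_mul_smul_comm]
    rw [Finset.sum_comm (f := fun c b => (w' c * w b) • (V c * (U b)ᵀ)), ← Finset.sum_add_distrib]
    simp only [← Finset.sum_add_distrib, mul_comm (w' _), smul_add]
  simp [expand, h]

theorem eq_zero_or_eq_zero_of_forall_apply_mul_apply_add_eq_zero {R m n : Type*} [CommRing R]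
    [IsDomain R] [CharZero R] {A B : Matrix m n R}
    (h : ∀ t p w u, A t p * B w u + B t u * A w p = 0) : A = 0 ∨ B = 0 := by
  refine or_iff_not_imp_left.mpr fun hA => ?_
  obtain ⟨t, p, htp⟩ : ∃ t p, A t p ≠ 0 := by
    by_contra! hcon
    exact hA (ext hcon)
  have hrow : ∀ u, B t u = 0 := fun u => by
    have : 2 * (A t p * B t u) = 0 := by linear_combination h t p t u
    simpa [htp] using this
  ext w u
  simpa [hrow, htp] using h t p w u

variable {K G ι : Type*} [Field K] [Group G] [Fintype ι] [DecidableEq ι]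
  (ρ : G →* Matrix ι ι K)

def toRepresentation : Representation K G (ι → K) :=
  (Matrix.toLinAlgEquiv' : Matrix ι ι K ≃ₐ[K] Module.End K (ι → K)).toMonoidHom.comp ρ

theorem toRepresentation_apply (g : G) : toRepresentation ρ g = (ρ g).toLin' := rfl

theorem character_toRepresentation (g : G) : (toRepresentation ρ).character g = (ρ g).trace :=
  Matrix.trace_toLin'_eq _

variable {ρ}

theorem transpose_eq_map_inv (horth : ∀ g, ρ g * (ρ g)ᵀ = 1) (g : G) : (ρ g)ᵀ = ρ g⁻¹ :=
  left_inv_eq_right_inv (mul_eq_one_comm.mp (horth g)) (by rw [← map_mul, mul_inv_cancel, map_one])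

variable [Fintype G]

theorem finrank_intertwiningMap_toRepresentation [CharZero K] (horth : ∀ g, ρ g * (ρ g)ᵀ = 1)
    (hsq : ∑ g, (ρ g).trace ^ 2 = Fintype.card G) :
    Module.finrank K (IntertwiningMap (toRepresentation ρ) (toRepresentation ρ)) = 1 := by
  have : Invertible (Nat.card G : K) := invertibleOfNonzero (by simp)
  rw [← Nat.cast_inj (R := K), ← card_inv_mul_sum_char_mul_char_eq_finrank]
  simp only [character_toRepresentation, ← transpose_eq_map_inv horth, trace_transpose, ← sq, hsq,
    Nat.card_eq_fintype_card]
  simp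

theorem exists_eq_smul_one_of_commute [CharZero K] (horth : ∀ g, ρ g * (ρ g)ᵀ = 1)
    (hsq : ∑ g, (ρ g).trace ^ 2 = Fintype.card G) {Y : Matrix ι ι K}
    (hY : ∀ g, ρ g * Y = Y * ρ g) : ∃ c : K, Y = c • 1 := by
  obtain hι | hι := isEmpty_or_nonempty ι
  · exact ⟨0, Subsingleton.elim _ _⟩
  let f : IntertwiningMap (toRepresentation ρ) (toRepresentation ρ) :=
    ⟨Y.toLin', fun g => by simp [toRepresentation_apply, ← Matrix.toLin'_mul, hY]⟩
  have hid : IntertwiningMap.id (toRepresentation ρ) ≠ 0 := fun h =>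
    one_ne_zero (congr_fun (DFunLike.congr_fun h fun _ => (1 : K)) hι.some)
  obtain ⟨c, hc⟩ := (finrank_eq_one_iff_of_nonzero' _ hid).mp
    (finrank_intertwiningMap_toRepresentation horth hsq) f
  refine ⟨c, Matrix.toLin'.injective ?_⟩
  have hcY := congrArg IntertwiningMap.toLinearMap hc
  rw [IntertwiningMap.toLinearMap_smul, IntertwiningMap.toLinearMap_id] at hcY
  rw [map_smul, toLin'_one, hcY]

theorem commute_sum_mul_mul_transpose (horth : ∀ g, ρ g * (ρ g)ᵀ = 1) (E : Matrix ι ι K) (h : G) :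
    ρ h * ∑ g, ρ g * E * (ρ g)ᵀ = (∑ g, ρ g * E * (ρ g)ᵀ) * ρ h := by
  rw [Finset.mul_sum, Finset.sum_mul]
  refine Fintype.sum_equiv (Equiv.mulLeft h) _ _ fun g => ?_
  simp only [Equiv.coe_mulLeft, map_mul, transpose_mul, mul_assoc,
    mul_eq_one_comm.mp (horth h), mul_one]

theorem sum_mul_mul_transpose_eq_smul_one [CharZero K] (horth : ∀ g, ρ g * (ρ g)ᵀ = 1)
    (hsq : ∑ g, (ρ g).trace ^ 2 = Fintype.card G) (E : Matrix ι ι K) :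
    ∑ g, ρ g * E * (ρ g)ᵀ = (Fintype.card G * E.trace / Fintype.card ι) • 1 := by
  obtain hι | hι := isEmpty_or_nonempty ι
  · exact Subsingleton.elim _ _
  obtain ⟨c, hc⟩ := exists_eq_smul_one_of_commute horth hsq
    (commute_sum_mul_mul_transpose horth E)
  have htrace : c * Fintype.card ι = Fintype.card G * E.trace := by
    rw [← smul_eq_mul, ← trace_one, ← trace_smul, ← hc, trace_sum]
    simp [trace_mul_cycle _ E, mul_eq_one_comm.mp (horth _)]
  rw [hc, ← htrace, mul_div_cancel_right₀ _ (by simp)]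

theorem sum_eq_zero_of_sum_trace_eq_zero [CharZero K] (horth : ∀ g, ρ g * (ρ g)ᵀ = 1)
    (hsq : ∑ g, (ρ g).trace ^ 2 = Fintype.card G) (htr : ∑ g, (ρ g).trace = 0) :
    ∑ g, ρ g = 0 := by
  obtain hι | hι := isEmpty_or_nonempty ι
  · exact Subsingleton.elim _ _
  obtain ⟨c, hc⟩ := exists_eq_smul_one_of_commute horth hsq (Y := ∑ g, ρ g) fun h => by
    rw [Finset.mul_sum, Finset.sum_mul]
    exact (Fintype.sum_equiv (Equiv.mulLeft h) _ _ fun g => (map_mul ρ h g).symm).trans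
      (Fintype.sum_equiv (Equiv.mulRight h) _ _ fun g => (map_mul ρ g h).symm).symm
  have hc0 : c = 0 := by
    simpa [← trace_sum, hc] using htr
  rw [hc, hc0, zero_smul]

theorem sum_apply_smul_eq_smul_single [CharZero K] (horth : ∀ g, ρ g * (ρ g)ᵀ = 1)
    (hsq : ∑ g, (ρ g).trace ^ 2 = Fintype.card G) (p q : ι) :
    ∑ g, ρ g p q • ρ g = ((Fintype.card G : K) / Fintype.card ι) • single p q 1 := by
  ext u v
  have hentry :=
    congrFun (congrFun (sum_mul_mul_transpose_eq_smul_one horth hsq (single q v 1)) p) u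
  simp only [sum_apply, mul_single_one_mul_apply, transpose_apply, smul_apply, smul_eq_mul,
    one_apply] at hentry
  simp only [sum_apply, smul_apply, smul_eq_mul, hentry, single_apply]
  by_cases hqv : q = v <;> by_cases hpu : p = u <;> simp [hqv, hpu, trace_single_eq_of_ne]

theorem sum_apply_smul_sub_one_eq_smul_single [CharZero K] (horth : ∀ g, ρ g * (ρ g)ᵀ = 1)
    (hsq : ∑ g, (ρ g).trace ^ 2 = Fintype.card G) (htr : ∑ g, (ρ g).trace = 0) (p q : ι) :
    ∑ g, ρ g p q • (ρ g - 1) = ((Fintype.card G : K) / Fintype.card ι) • single p q 1 := by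
  have hsum : ∑ g, ρ g p q = 0 := by
    rw [← sum_apply, sum_eq_zero_of_sum_trace_eq_zero horth hsq htr, zero_apply]
  simp only [smul_sub, sum_sub_distrib, sum_apply_smul_eq_smul_single horth hsq, ← sum_smul, hsum,
    zero_smul, sub_zero]

theorem eq_zero_or_eq_zero_of_forall_mul_transpose_eq [CharZero K] (horth : ∀ g, ρ g * (ρ g)ᵀ = 1)
    (hsq : ∑ g, (ρ g).trace ^ 2 = Fintype.card G) (htr : ∑ g, (ρ g).trace = 0)
    {C A B M : Matrix ι ι K}
    (hM : ∀ g h, (C + A * ρ g + B * ρ h) * (C + A * ρ g + B * ρ h)ᵀ = M) : A = 0 ∨ B = 0 := by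
  have hmixed : ∀ g h, A * (ρ g - 1) * (B * (ρ h - 1))ᵀ + B * (ρ h - 1) * (A * (ρ g - 1))ᵀ = 0 := by
    intro g h
    have := mul_transpose_mixed_difference C (A * ρ g) (A * ρ 1) (B * ρ h) (B * ρ 1)
    rwa [hM, hM, hM, hM, sub_self, zero_sub, neg_add_cancel, ← mul_sub, ← mul_sub, map_one] at this
  refine eq_zero_or_eq_zero_of_forall_apply_mul_apply_add_eq_zero fun t p w u => ?_
  have hweighted :=
    sum_smul_mul_transpose_add_eq_zero (fun g => ρ g p p) (fun h => ρ h u p) _ _ hmixed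
  simp only [← Matrix.mul_smul, ← mul_sum, sum_apply_smul_sub_one_eq_smul_single horth hsq htr]
    at hweighted
  have hκ : (Fintype.card G : K) / Fintype.card ι ≠ 0 := by
    have : Nonempty ι := ⟨p⟩
    simp
  simp only [Matrix.mul_smul, transpose_smul, Matrix.smul_mul, mul_single_mul_transpose,
    ← smul_add, smul_eq_zero, hκ, false_or] at hweighted
  simpa [mul_single_one_mul_apply] using congr_fun (congr_fun hweighted t) w

end Matrix

theorem Fintype.sum_apply_update_update {ι β M : Type*} [Fintype ι] [DecidableEq ι]
    [AddCommGroup M] (F : ι → β → M) (x : ι → β) {i j : ι} (hij : i ≠ j) (a b : β) :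
    ∑ k, F k (Function.update (Function.update x i a) j b k)
      = ∑ k, F k (x k) + (F i a - F i (x i)) + (F j b - F j (x j)) := by
  rw [add_assoc, ← sub_eq_iff_eq_add', ← Finset.sum_sub_distrib,
    Fintype.sum_eq_add i j hij fun k hk => by
      simp [Function.update_of_ne hk.1, Function.update_of_ne hk.2]]
  simp [Function.update_of_ne hij]

theorem stmt_18_general (m n : ℕ) (hm : 3 ≤ m)
    (ρ : Equiv.Perm (Fin m) →* Matrix (Fin (m - 1)) (Fin (m - 1)) ℝ)
    (horth : ∀ x, ρ x * (ρ x)ᵀ = 1)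
    (htr : ∀ x, (ρ x).trace = ((Finset.univ.filter fun i : Fin m => x i = i).card : ℝ) - 1)
    (B M : Matrix (Fin (m - 1)) (Fin (m - 1)) ℝ)
    (A : Fin n → Matrix (Fin (m - 1)) (Fin (m - 1)) ℝ)
    (g : (Fin n → Equiv.Perm (Fin m)) → Matrix (Fin (m - 1)) (Fin (m - 1)) ℝ)
    (hg : ∀ x, g x = B + ∑ i, A i * ρ (x i))
    (hcons : ∀ x, g x * (g x)ᵀ = M) :
    ∀ i j : Fin n, i ≠ j → A i = 0 ∨ A j = 0 := by
  intro i j hij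
  have hcard : 2 ≤ Fintype.card (Fin m) := by rw [Fintype.card_fin]; omega
  have : Nonempty (Fin m) := ⟨⟨0, by omega⟩⟩
  have hsum : ∑ σ, (ρ σ).trace = 0 := by
    simpa only [htr] using Equiv.Perm.sum_card_fixedPoints_sub_one (K := ℝ) (α := Fin m)
  have hsq : ∑ σ, (ρ σ).trace ^ 2 = Fintype.card (Equiv.Perm (Fin m)) := by
    simpa only [htr] using Equiv.Perm.sum_card_fixedPoints_sub_one_sq (K := ℝ) hcard
  set C := B + ∑ k, A k - A i - A j
  refine Matrix.eq_zero_or_eq_zero_of_forall_mul_transpose_eq horth hsq hsum (C := C) (M := M)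
    fun σ τ => ?_
  have hslice : g (Function.update (Function.update 1 i σ) j τ) = C + A i * ρ σ + A j * ρ τ := by
    rw [hg, Fintype.sum_apply_update_update (fun k σ => A k * ρ σ) 1 hij]
    simp only [Pi.one_apply, map_one, mul_one, C]
    abel
  rw [← hslice, hcons]

/-- Let `ρ` be the standard (m−1)-dimensional real orthogonal irreducible representation of
`S_m` (`m ≥ 3`), and let `g : S_m^n → ℝ^{(m−1)×(m−1)}` have the form
`g(x) = B + Σᵢ Aⁱ·ρ(xᵢ)` with `E g = 0`. If `g(x)g(x)ᵀ = M` for all `x` with `M ≠ 0` fixed,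
then at most one of the matrices `A¹,…,Aⁿ` is nonzero. -/
theorem stmt_18 (m n : ℕ) (hm : 3 ≤ m)
    (ρ : Equiv.Perm (Fin m) →* Matrix (Fin (m - 1)) (Fin (m - 1)) ℝ)
    (horth : ∀ x, ρ x * (ρ x)ᵀ = 1)
    (htr : ∀ x, (ρ x).trace = ((Finset.univ.filter fun i : Fin m => x i = i).card : ℝ) - 1)
    (B M : Matrix (Fin (m - 1)) (Fin (m - 1)) ℝ)
    (A : Fin n → Matrix (Fin (m - 1)) (Fin (m - 1)) ℝ)
    (g : (Fin n → Equiv.Perm (Fin m)) → Matrix (Fin (m - 1)) (Fin (m - 1)) ℝ)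
    (hg : ∀ x, g x = B + ∑ i, A i * ρ (x i))
    (hmean : ∑ x : Fin n → Equiv.Perm (Fin m), g x = 0)
    (hM : M ≠ 0)
    (hcons : ∀ x, g x * (g x)ᵀ = M) :
    ∀ i j : Fin n, i ≠ j → A i = 0 ∨ A j = 0 :=
  stmt_18_general m n hm ρ horth htr B M A g hg hcons
end

section
/- Let g : S_m^n → ℝ^{(m−1)×(m−1)} satisfy: there is a matrix M with range(g) ⊆ M·{ρ¹(y) : y ∈ S_m}, and suppose there exist i and a matrix A with E_x‖g(x) − Aρ¹(xᵢ)‖₂² ≤ δ². Then there exists A′ with A′ ∈ M·{ρ¹(y) : y} (i.e. h′(x) = A′ρ¹(xᵢ) takes consistent values) such that E_x‖g(x) − A′ρ¹(xᵢ)‖₂² ≤ 4δ². -/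
open Matrix BigOperators Finset

/-!
Orthogonal matrices preserve the Frobenius norm, so `‖g x - A ρ(xᵢ)‖₂ = ‖g x ρ(xᵢ)⁻¹ - A‖₂`.
Since the average of the squared distances is at most `δ²`, some point `x₀` has
`‖g x₀ - A ρ(x₀ᵢ)‖₂ ≤ δ`; then `A' := g x₀ ρ(x₀ᵢ)⁻¹` lies in `M·ρ(S_m)` and is within `δ` of `A`,
and `(a + b)² ≤ 2a² + 2b²` bounds the new average by `2δ² + 2δ²`.
-/

section SumSq

variable {ι κ R : Type*} [Fintype ι] [Fintype κ]

theorem sum_sum_sq_eq_trace_mul_transpose [CommSemiring R] (B : Matrix ι κ R) :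
    ∑ s, ∑ t, B s t ^ 2 = (B * Bᵀ).trace := by
  simp [Matrix.trace, Matrix.mul_apply, sq]

theorem sum_sum_sq_mul_of_mul_transpose_eq_one [CommSemiring R] [DecidableEq κ]
    (B : Matrix ι κ R) {Q : Matrix κ κ R} (hQ : Q * Qᵀ = 1) :
    ∑ s, ∑ t, (B * Q) s t ^ 2 = ∑ s, ∑ t, B s t ^ 2 := by
  rw [sum_sum_sq_eq_trace_mul_transpose, sum_sum_sq_eq_trace_mul_transpose, transpose_mul,
    Matrix.mul_assoc, ← Matrix.mul_assoc Q, hQ, Matrix.one_mul]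

theorem sum_sum_sq_sub_comm [CommRing R] (U V : Matrix ι κ R) :
    ∑ s, ∑ t, (U - V) s t ^ 2 = ∑ s, ∑ t, (V - U) s t ^ 2 := by
  exact sum_congr rfl fun s _ => sum_congr rfl fun t _ => sub_sq_comm (U s t) (V s t)

theorem sum_sum_sq_add_le [CommRing R] [LinearOrder R] [IsStrictOrderedRing R]
    (U V : Matrix ι κ R) :
    ∑ s, ∑ t, (U + V) s t ^ 2 ≤ 2 * ∑ s, ∑ t, U s t ^ 2 + 2 * ∑ s, ∑ t, V s t ^ 2 := by
  simp only [mul_sum, ← sum_add_distrib, ← mul_add]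
  gcongr with s _ t _
  exact add_sq_le

end SumSq

section Rounding

variable {ι κ R : Type*} [Fintype ι] [Fintype κ] [DecidableEq κ]

theorem sum_sum_sq_sub_eq_of_mul_eq [CommRing R] {G A A' : Matrix ι κ R} {Q : Matrix κ κ R}
    (hQ : Q * Qᵀ = 1) (hA' : A' * Q = G) :
    ∑ s, ∑ t, (A - A') s t ^ 2 = ∑ s, ∑ t, (G - A * Q) s t ^ 2 := by
  rw [← sum_sum_sq_mul_of_mul_transpose_eq_one _ hQ, Matrix.sub_mul, hA', sum_sum_sq_sub_comm]

theorem sum_sum_sq_sub_mul_le [CommRing R] [LinearOrder R] [IsStrictOrderedRing R]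
    (G A A' : Matrix ι κ R) {Q : Matrix κ κ R} (hQ : Q * Qᵀ = 1) :
    ∑ s, ∑ t, (G - A' * Q) s t ^ 2 ≤
      2 * ∑ s, ∑ t, (G - A * Q) s t ^ 2 + 2 * ∑ s, ∑ t, (A - A') s t ^ 2 := by
  have hsplit : G - A' * Q = (G - A * Q) + (A - A') * Q := by rw [Matrix.sub_mul]; abel
  rw [hsplit, ← sum_sum_sq_mul_of_mul_transpose_eq_one (A - A') hQ]
  exact sum_sum_sq_add_le _ _

end Rounding

theorem stmt_19_general (m n : ℕ)
    (ρ : Equiv.Perm (Fin m) →* Matrix (Fin (m - 1)) (Fin (m - 1)) ℝ)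
    (horth : ∀ x, ρ x * (ρ x)ᵀ = 1)
    (M : Matrix (Fin (m - 1)) (Fin (m - 1)) ℝ)
    (g : (Fin n → Equiv.Perm (Fin m)) → Matrix (Fin (m - 1)) (Fin (m - 1)) ℝ)
    (hrange : ∀ x, ∃ y : Equiv.Perm (Fin m), g x = M * ρ y)
    (i : Fin n) (A : Matrix (Fin (m - 1)) (Fin (m - 1)) ℝ) (δ : ℝ)
    (hclose : ((Fintype.card (Fin n → Equiv.Perm (Fin m)) : ℝ))⁻¹ *
        ∑ x : Fin n → Equiv.Perm (Fin m),
          (∑ s, ∑ t, ((g x - A * ρ (x i)) s t) ^ 2) ≤ δ ^ 2) :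
    ∃ A' : Matrix (Fin (m - 1)) (Fin (m - 1)) ℝ,
      (∃ y : Equiv.Perm (Fin m), A' = M * ρ y) ∧
      ((Fintype.card (Fin n → Equiv.Perm (Fin m)) : ℝ))⁻¹ *
          ∑ x : Fin n → Equiv.Perm (Fin m),
            (∑ s, ∑ t, ((g x - A' * ρ (x i)) s t) ^ 2) ≤ 4 * δ ^ 2 := by
  rw [inv_mul_eq_div, ← Fintype.expect_eq_sum_div_card] at hclose
  obtain ⟨x₀, -, hx₀⟩ := exists_le_of_expect_le univ_nonempty hclose
  obtain ⟨y₀, hy₀⟩ := hrange x₀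
  set A' := g x₀ * ρ (x₀ i)⁻¹
  have hA' : A' * ρ (x₀ i) = g x₀ := by
    rw [Matrix.mul_assoc, ← map_mul, inv_mul_cancel, map_one, Matrix.mul_one]
  have hdist : ∑ s, ∑ t, (A - A') s t ^ 2 ≤ δ ^ 2 :=
    (sum_sum_sq_sub_eq_of_mul_eq (horth _) hA').trans_le hx₀
  refine ⟨A', ⟨y₀ * (x₀ i)⁻¹, by rw [map_mul, ← Matrix.mul_assoc, ← hy₀]⟩, ?_⟩
  rw [inv_mul_eq_div, ← Fintype.expect_eq_sum_div_card]
  calc 𝔼 x, ∑ s, ∑ t, (g x - A' * ρ (x i)) s t ^ 2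
      ≤ 𝔼 x, (2 * ∑ s, ∑ t, (g x - A * ρ (x i)) s t ^ 2 + 2 * δ ^ 2) :=
        expect_le_expect fun x _ =>
          (sum_sum_sq_sub_mul_le _ _ _ (horth _)).trans (by linarith)
    _ = 2 * 𝔼 x, ∑ s, ∑ t, (g x - A * ρ (x i)) s t ^ 2 + 2 * δ ^ 2 := by
        rw [expect_add_distrib, ← mul_expect, expect_const univ_nonempty]
    _ ≤ 4 * δ ^ 2 := by linarith

/-- Rounding to a consistent dictator: let `ρ` be the standard (m−1)-dimensional real
orthogonal representation of `S_m`, and `g : S_m^n → ℝ^{(m−1)×(m−1)}` with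
`range(g) ⊆ M·{ρ(y)}`. If for some coordinate `i` and matrix `A` we have
`E_x ‖g(x) − A·ρ(xᵢ)‖₂² ≤ δ²`, then there is `A' ∈ M·{ρ(y)}` with
`E_x ‖g(x) − A'·ρ(xᵢ)‖₂² ≤ 4δ²` (Frobenius norms). -/
theorem stmt_19 (m n : ℕ)
    (ρ : Equiv.Perm (Fin m) →* Matrix (Fin (m - 1)) (Fin (m - 1)) ℝ)
    (horth : ∀ x, ρ x * (ρ x)ᵀ = 1)
    (htr : ∀ x, (ρ x).trace = ((Finset.univ.filter fun i : Fin m => x i = i).card : ℝ) - 1)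
    (M : Matrix (Fin (m - 1)) (Fin (m - 1)) ℝ)
    (g : (Fin n → Equiv.Perm (Fin m)) → Matrix (Fin (m - 1)) (Fin (m - 1)) ℝ)
    (hrange : ∀ x, ∃ y : Equiv.Perm (Fin m), g x = M * ρ y)
    (i : Fin n) (A : Matrix (Fin (m - 1)) (Fin (m - 1)) ℝ) (δ : ℝ)
    (hclose : ((Fintype.card (Fin n → Equiv.Perm (Fin m)) : ℝ))⁻¹ *
        ∑ x : Fin n → Equiv.Perm (Fin m),
          (∑ s, ∑ t, ((g x - A * ρ (x i)) s t) ^ 2) ≤ δ ^ 2) :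
    ∃ A' : Matrix (Fin (m - 1)) (Fin (m - 1)) ℝ,
      (∃ y : Equiv.Perm (Fin m), A' = M * ρ y) ∧
      ((Fintype.card (Fin n → Equiv.Perm (Fin m)) : ℝ))⁻¹ *
          ∑ x : Fin n → Equiv.Perm (Fin m),
            (∑ s, ∑ t, ((g x - A' * ρ (x i)) s t) ^ 2) ≤ 4 * δ ^ 2 :=
  stmt_19_general m n ρ horth M g hrange i A δ hclose
end
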